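/- Let ξ₁,…,ξₙ ∈ H and let T₁,…,Tₙ : H → H be linear maps. Then in the algebraic Fock space F_alg(H): Π_{i=1}^n (a(ξᵢ) + a*(ξᵢ) + p(Tᵢ)) Ω = Σ_{π∈Part(n)} Σ_{S : Sing(π) ⊆ S ⊆ π} q^{rc(S,π)} · [ Π_{B∈π∖S} ⟨ξ_{min(B)}, (Π_{i∈B, i≠min(B), i≠max(B)} Tᵢ) ξ_{max(B)}⟩ ] · ⊗_{B∈S} ( (Π_{i∈B, i≠max(B)} Tᵢ) ξ_{max(B)} ), where Sing(π) is the set of one-element blocks of π, each product of operators Tᵢ within a block is composed in increasing order of the indices i (leftmost factor has smallest index; empty products are the identity), and the tensor product over B ∈ S is taken in increasing order of min(B), giving an element of H^{⊗|S|}. (Evaluating the Wick-product expansion of X(f₁)⋯X(fₙ) on the vacuum vector.) -/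

import Mathlib

open scoped BigOperators

noncomputable section

/-! Combinatorics of extended set partitions of `{1,…,n}`. -/

/-- The number of right restricted crossings of the extended partition `(S, π)` at the point
`k`:  if `k` lies in a block `B ∈ π` and is not the maximum of `B`, then with
`j = min{ i ∈ B : i > k }` it is the number of blocks `C ∈ π` meeting `{k+1,…,j−1}` such that
`C ∈ S` or `C` meets `{1,…,k}`; it is `0` if `k = max B`. -/
def rcAt (π S : Finset (Finset ℕ)) (k : ℕ) : ℕ :=
  (π.filter (fun C =>
      (∃ B ∈ π, k ∈ B ∧ ∃ j ∈ B, k < j ∧ (∀ i ∈ B, k < i → j ≤ i) ∧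
        (C ∩ Finset.Ioo k j).Nonempty)
      ∧ (C ∈ S ∨ (C ∩ Finset.Icc 1 k).Nonempty))).card

/-- The total number of right restricted crossings `rc(S,π) = Σ_{k=1}^n rc(k,S,π)`. -/
def rc (n : ℕ) (π S : Finset (Finset ℕ)) : ℕ :=
  ∑ k ∈ Finset.Icc 1 n, rcAt π S k

/-- The finset of all set partitions of `{1,…,n}`: collections of disjoint nonempty subsets
of `{1,…,n}` whose union is `{1,…,n}`. -/
def partitionsOf (n : ℕ) : Finset (Finset (Finset ℕ)) :=
  ((Finset.Icc 1 n).powerset.powerset).filter (fun π =>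
    ∅ ∉ π ∧ (∀ B ∈ π, ∀ C ∈ π, B ≠ C → Disjoint B C) ∧ π.biUnion id = Finset.Icc 1 n)

/-- The minimum of a block (for nonempty finsets of `ℕ`). -/
def minN (B : Finset ℕ) : ℕ := WithTop.untopD 0 B.min

/-- The maximum of a block. -/
def maxN (B : Finset ℕ) : ℕ := WithBot.unbotD 0 B.max

/-- The block of the partition `π` containing `m`. -/
def blockOf (π : Finset (Finset ℕ)) (m : ℕ) : Finset ℕ :=
  (π.filter (fun B => m ∈ B)).biUnion id

/-! ### Auxiliary combinatorics -/

def pIcc (a n : ℕ) : Finset (Finset (Finset ℕ)) :=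
  ((Finset.Icc a n).powerset.powerset).filter (fun π =>
    ∅ ∉ π ∧ (∀ B ∈ π, ∀ C ∈ π, B ≠ C → Disjoint B C) ∧ π.biUnion id = Finset.Icc a n)

lemma partitionsOf_eq_pIcc (n : ℕ) : partitionsOf n = pIcc 1 n := rfl

structure IsPart (a n : ℕ) (π : Finset (Finset ℕ)) : Prop where
  subs : ∀ B ∈ π, B ⊆ Finset.Icc a n
  nem : ∅ ∉ π
  disj : ∀ B ∈ π, ∀ C ∈ π, B ≠ C → Disjoint B C
  cover : π.biUnion id = Finset.Icc a n

lemma mem_pIcc {a n : ℕ} {π : Finset (Finset ℕ)} : π ∈ pIcc a n ↔ IsPart a n π := by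
  constructor
  · intro h
    rw [pIcc, Finset.mem_filter] at h
    obtain ⟨h1, h2, h3, h4⟩ := h
    refine ⟨fun B hB => ?_, h2, h3, h4⟩
    rw [Finset.mem_powerset] at h1
    have := h1 hB
    rwa [Finset.mem_powerset] at this
  · rintro ⟨h1, h2, h3, h4⟩
    rw [pIcc, Finset.mem_filter]
    refine ⟨?_, h2, h3, h4⟩
    rw [Finset.mem_powerset]
    intro B hB
    rw [Finset.mem_powerset]
    exact h1 B hB

namespace IsPart

variable {a n : ℕ} {π : Finset (Finset ℕ)}

lemma nonempty_mem (h : IsPart a n π) {B : Finset ℕ} (hB : B ∈ π) : B.Nonempty := by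
  rw [Finset.nonempty_iff_ne_empty]
  rintro rfl
  exact h.nem hB

lemma eq_of_mem_mem (h : IsPart a n π) {B C : Finset ℕ} (hB : B ∈ π) (hC : C ∈ π)
    {k : ℕ} (hkB : k ∈ B) (hkC : k ∈ C) : B = C := by
  by_contra hne
  exact Finset.disjoint_left.1 (h.disj B hB C hC hne) hkB hkC

lemma blockOf_eq (h : IsPart a n π) {B : Finset ℕ} (hB : B ∈ π) {m : ℕ} (hm : m ∈ B) :
    blockOf π m = B := by
  rw [blockOf]
  have : π.filter (fun C => m ∈ C) = {B} := by
    ext C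
    simp only [Finset.mem_filter, Finset.mem_singleton]
    constructor
    · rintro ⟨hC, hmC⟩; exact (h.eq_of_mem_mem hC hB hmC hm)
    · rintro rfl; exact ⟨hB, hm⟩
  rw [this, Finset.singleton_biUnion]; rfl

lemma le_of_mem_mem (h : IsPart a n π) {B : Finset ℕ} (hB : B ∈ π) {x : ℕ} (hx : x ∈ B) :
    a ≤ x ∧ x ≤ n := by
  have := h.subs B hB hx
  rw [Finset.mem_Icc] at this
  exact this

lemma not_mem_of_lt (h : IsPart a n π) {B : Finset ℕ} (hB : B ∈ π) {e : ℕ} (he : e < a) :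
    e ∉ B := fun hx => absurd (h.le_of_mem_mem hB hx).1 (by omega)

lemma exists_block (h : IsPart a n π) {x : ℕ} (hx : x ∈ Finset.Icc a n) : ∃ B ∈ π, x ∈ B := by
  rw [← h.cover] at hx
  simpa using hx

end IsPart

/-! ### minN / maxN -/

lemma minN_eq_min' {B : Finset ℕ} (h : B.Nonempty) : minN B = B.min' h := by
  rw [minN, ← Finset.coe_min' h, WithTop.untopD_coe]

lemma maxN_eq_max' {B : Finset ℕ} (h : B.Nonempty) : maxN B = B.max' h := by
  rw [maxN, ← Finset.coe_max' h, WithBot.unbotD_coe]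

lemma minN_mem {B : Finset ℕ} (h : B.Nonempty) : minN B ∈ B := by
  rw [minN_eq_min' h]; exact B.min'_mem h

lemma maxN_mem {B : Finset ℕ} (h : B.Nonempty) : maxN B ∈ B := by
  rw [maxN_eq_max' h]; exact B.max'_mem h

lemma minN_le {B : Finset ℕ} {x : ℕ} (hx : x ∈ B) : minN B ≤ x := by
  rw [minN_eq_min' ⟨x, hx⟩]; exact B.min'_le x hx

lemma le_maxN {B : Finset ℕ} {x : ℕ} (hx : x ∈ B) : x ≤ maxN B := by
  rw [maxN_eq_max' ⟨x, hx⟩]; exact B.le_max' x hx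

lemma minN_insert_of_lt {e : ℕ} {B : Finset ℕ} (h : ∀ x ∈ B, e < x) :
    minN (insert e B) = e := by
  have hne : (insert e B).Nonempty := ⟨e, Finset.mem_insert_self e B⟩
  have h1 : minN (insert e B) ≤ e := minN_le (Finset.mem_insert_self e B)
  have h2 := minN_mem hne
  rcases Finset.mem_insert.1 h2 with h2 | h2
  · exact h2
  · exact absurd (h _ h2) (by omega)

lemma maxN_insert_of_lt {e : ℕ} {B : Finset ℕ} (hB : B.Nonempty) (h : ∀ x ∈ B, e < x) :
    maxN (insert e B) = maxN B := by
  have h1 : maxN B ≤ maxN (insert e B) :=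
    le_maxN (Finset.mem_insert_of_mem (maxN_mem hB))
  have h2 := maxN_mem (⟨e, Finset.mem_insert_self e B⟩ : (insert e B).Nonempty)
  rcases Finset.mem_insert.1 h2 with h2 | h2
  · have : e < maxN B := h _ (maxN_mem hB)
    omega
  · have := le_maxN h2
    omega

lemma minN_singleton (e : ℕ) : minN {e} = e := by
  rw [minN_eq_min' ⟨e, Finset.mem_singleton_self e⟩]
  simp

lemma maxN_singleton (e : ℕ) : maxN {e} = e := by
  rw [maxN_eq_max' ⟨e, Finset.mem_singleton_self e⟩]
  simp

lemma minN_injOn {a n : ℕ} {π : Finset (Finset ℕ)} (h : IsPart a n π) {B C : Finset ℕ}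
    (hB : B ∈ π) (hC : C ∈ π) (hmin : minN B = minN C) : B = C :=
  h.eq_of_mem_mem hB hC (minN_mem (h.nonempty_mem hB))
    (hmin ▸ minN_mem (h.nonempty_mem hC))

/-! ### rcAt lemmas -/

lemma rcAt_eq_zero {π S : Finset (Finset ℕ)} {k : ℕ}
    (h : ∀ B ∈ π, k ∈ B → ∀ j ∈ B, ¬ k < j) : rcAt π S k = 0 := by
  rw [rcAt, Finset.card_eq_zero, Finset.filter_eq_empty_iff]
  rintro C hC ⟨⟨B, hB, hkB, j, hjB, hkj, -⟩, -⟩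
  exact h B hB hkB j hjB hkj

lemma rcAt_addSingleton_gt {π S S' : Finset (Finset ℕ)} {e k : ℕ}
    (hπ : ∀ C ∈ π, e ∉ C) (hS : ∀ C ∈ π, (C ∈ S' ↔ C ∈ S)) (hk : e < k) :
    rcAt (insert {e} π) S' k = rcAt π S k := by
  rw [rcAt, rcAt, Finset.filter_insert, if_neg]
  · refine congrArg Finset.card (Finset.filter_congr ?_)
    intro C hC
    constructor
    · rintro ⟨⟨B, hB, hkB, j, hj⟩, h2⟩
      rcases Finset.mem_insert.1 hB with rfl | hB
      · rw [Finset.mem_singleton] at hkB; omega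
      · exact ⟨⟨B, hB, hkB, j, hj⟩, by rwa [hS C hC] at h2⟩
    · rintro ⟨⟨B, hB, hkB, j, hj⟩, h2⟩
      exact ⟨⟨B, Finset.mem_insert_of_mem hB, hkB, j, hj⟩, by rwa [hS C hC]⟩
  · rintro ⟨⟨B, hB, hkB, j, hjB, hkj, hmin, x, hx⟩, -⟩
    rw [Finset.mem_inter, Finset.mem_singleton, Finset.mem_Ioo] at hx
    omega

lemma rcAt_merge_gt {π S S' : Finset (Finset ℕ)} {e k : ℕ} {B : Finset ℕ}
    (hπe : ∀ C ∈ π, e ∉ C) (hB : B ∈ π) (hBS : B ∈ S)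
    (hS : ∀ C ∈ π, C ≠ B → (C ∈ S' ↔ C ∈ S)) (he : 1 ≤ e) (hk : e < k) :
    rcAt (insert (insert e B) (π.erase B)) S' k = rcAt π S k := by
  classical
  set B' := insert e B with hB'def
  have hB'B : B' ≠ B := by
    intro hEq
    exact hπe B hB (hEq ▸ Finset.mem_insert_self e B)
  have hB'π : B' ∉ π := fun hmem => hπe B' hmem (Finset.mem_insert_self e B)
  have hIoo : ∀ j : ℕ, B' ∩ Finset.Ioo k j = B ∩ Finset.Ioo k j := by
    intro j
    apply Finset.insert_inter_of_notMem
    rw [Finset.mem_Ioo]; omega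
  -- transfer of the existential witness
  have hfwd : ∀ D : Finset ℕ,
      (∃ B₀ ∈ insert B' (π.erase B), k ∈ B₀ ∧ ∃ j ∈ B₀, k < j ∧
        (∀ i ∈ B₀, k < i → j ≤ i) ∧ (D ∩ Finset.Ioo k j).Nonempty) →
      (∃ B₀ ∈ π, k ∈ B₀ ∧ ∃ j ∈ B₀, k < j ∧
        (∀ i ∈ B₀, k < i → j ≤ i) ∧ (D ∩ Finset.Ioo k j).Nonempty) := by
    rintro D ⟨B₀, hB₀, hkB₀, j, hjB₀, hkj, hmin, hne⟩
    rcases Finset.mem_insert.1 hB₀ with rfl | hB₀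
    · refine ⟨B, hB, ?_, j, ?_, hkj, ?_, hne⟩
      · rcases Finset.mem_insert.1 hkB₀ with h1 | h1
        · omega
        · exact h1
      · rcases Finset.mem_insert.1 hjB₀ with h1 | h1
        · omega
        · exact h1
      · exact fun i hi hki => hmin i (Finset.mem_insert_of_mem hi) hki
    · exact ⟨B₀, Finset.mem_of_mem_erase hB₀, hkB₀, j, hjB₀, hkj, hmin, hne⟩
  have hbwd : ∀ D : Finset ℕ,
      (∃ B₀ ∈ π, k ∈ B₀ ∧ ∃ j ∈ B₀, k < j ∧
        (∀ i ∈ B₀, k < i → j ≤ i) ∧ (D ∩ Finset.Ioo k j).Nonempty) →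
      (∃ B₀ ∈ insert B' (π.erase B), k ∈ B₀ ∧ ∃ j ∈ B₀, k < j ∧
        (∀ i ∈ B₀, k < i → j ≤ i) ∧ (D ∩ Finset.Ioo k j).Nonempty) := by
    rintro D ⟨B₀, hB₀, hkB₀, j, hjB₀, hkj, hmin, hne⟩
    by_cases hEq : B₀ = B
    · subst hEq
      refine ⟨B', Finset.mem_insert_self _ _, Finset.mem_insert_of_mem hkB₀,
        j, Finset.mem_insert_of_mem hjB₀, hkj, ?_, hne⟩
      intro i hi hki
      rcases Finset.mem_insert.1 hi with rfl | hi
      · omega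
      · exact hmin i hi hki
    · exact ⟨B₀, Finset.mem_insert_of_mem (Finset.mem_erase.2 ⟨hEq, hB₀⟩), hkB₀,
        j, hjB₀, hkj, hmin, hne⟩
  rw [rcAt, rcAt]
  apply Finset.card_nbij' (fun C => if C = B' then B else C) (fun C => if C = B then B' else C)
  · intro C hC
    rw [Finset.mem_coe, Finset.mem_filter] at hC ⊢; beta_reduce
    obtain ⟨hCmem, hP1, hP2⟩ := hC
    by_cases hCB' : C = B'
    · subst hCB'
      rw [if_pos rfl]
      refine ⟨hB, ?_, Or.inl hBS⟩
      obtain ⟨B₀, hB₀, hkB₀, j, hjB₀, hkj, hmin, hne⟩ := hfwd _ hP1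
      rw [hIoo j] at hne
      exact ⟨B₀, hB₀, hkB₀, j, hjB₀, hkj, hmin, hne⟩
    · rw [if_neg hCB']
      have hCe : C ∈ π.erase B := by
        rcases Finset.mem_insert.1 hCmem with h1 | h1
        · exact absurd h1 hCB'
        · exact h1
      have hCπ : C ∈ π := Finset.mem_of_mem_erase hCe
      refine ⟨hCπ, hfwd _ hP1, ?_⟩
      rcases hP2 with h1 | h1
      · exact Or.inl ((hS C hCπ (Finset.ne_of_mem_erase hCe)).1 h1)
      · exact Or.inr h1
  · intro C hC
    rw [Finset.mem_coe, Finset.mem_filter] at hC ⊢; beta_reduce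
    obtain ⟨hCmem, hP1, hP2⟩ := hC
    by_cases hCB : C = B
    · subst hCB
      rw [if_pos rfl]
      refine ⟨Finset.mem_insert_self _ _, ?_, Or.inr ⟨e, ?_⟩⟩
      · obtain ⟨B₀, hB₀, hkB₀, j, hjB₀, hkj, hmin, hne⟩ := hbwd _ hP1
        rw [← hIoo j] at hne
        exact ⟨B₀, hB₀, hkB₀, j, hjB₀, hkj, hmin, hne⟩
      · rw [Finset.mem_inter, Finset.mem_Icc]
        exact ⟨Finset.mem_insert_self _ _, he, by omega⟩
    · rw [if_neg hCB]
      refine ⟨Finset.mem_insert_of_mem (Finset.mem_erase.2 ⟨hCB, hCmem⟩), hbwd _ hP1, ?_⟩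
      rcases hP2 with h1 | h1
      · exact Or.inl ((hS C hCmem hCB).2 h1)
      · exact Or.inr h1
  · intro C hC
    rw [Finset.mem_coe, Finset.mem_filter] at hC; beta_reduce
    by_cases hCB' : C = B'
    · simp [hCB']
    · rw [if_neg hCB', if_neg]
      rcases Finset.mem_insert.1 hC.1 with h1 | h1
      · exact absurd h1 hCB'
      · exact Finset.ne_of_mem_erase h1
  · intro C hC
    rw [Finset.mem_coe, Finset.mem_filter] at hC; beta_reduce
    by_cases hCB : C = B
    · simp [hCB, hB'B]
    · rw [if_neg hCB, if_neg]
      intro hEq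
      exact hB'π (hEq ▸ hC.1)

lemma rcAt_merge_at {n e : ℕ} {π S S' : Finset (Finset ℕ)} {B : Finset ℕ}
    (h : IsPart (e+1) n π) (he : 1 ≤ e) (hB : B ∈ π) (hSπ : S ⊆ π)
    (hS : ∀ C ∈ π.erase B, (C ∈ S' ↔ C ∈ S)) :
    rcAt (insert (insert e B) (π.erase B)) S' e = (S.filter fun C => minN C < minN B).card := by
  classical
  set B' := insert e B with hB'def
  have hBne : B.Nonempty := h.nonempty_mem hB
  set j₀ := minN B with hj₀def
  have hj₀B : j₀ ∈ B := minN_mem hBne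
  have hej₀ : e < j₀ := by have := (h.le_of_mem_mem hB hj₀B).1; omega
  have hEx : ∀ D : Finset ℕ,
      (∃ B₀ ∈ insert B' (π.erase B), e ∈ B₀ ∧ ∃ j ∈ B₀, e < j ∧
        (∀ i ∈ B₀, e < i → j ≤ i) ∧ (D ∩ Finset.Ioo e j).Nonempty) ↔
      (D ∩ Finset.Ioo e j₀).Nonempty := by
    intro D
    constructor
    · rintro ⟨B₀, hB₀, heB₀, j, hjB₀, hej, hmin, hne⟩
      rcases Finset.mem_insert.1 hB₀ with rfl | hB₀
      · have hjB : j ∈ B := by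
          rcases Finset.mem_insert.1 hjB₀ with h1 | h1
          · omega
          · exact h1
        have h1 : j ≤ j₀ := hmin j₀ (Finset.mem_insert_of_mem hj₀B) hej₀
        have h2 : j₀ ≤ j := minN_le hjB
        have : j = j₀ := by omega
        rwa [this] at hne
      · exact absurd heB₀ (h.not_mem_of_lt (Finset.mem_of_mem_erase hB₀) (by omega))
    · intro hne
      refine ⟨B', Finset.mem_insert_self _ _, Finset.mem_insert_self _ _,
        j₀, Finset.mem_insert_of_mem hj₀B, hej₀, ?_, hne⟩
      intro i hi hei
      rcases Finset.mem_insert.1 hi with rfl | hi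
      · omega
      · exact minN_le hi
  rw [rcAt]
  congr 1
  ext x
  rw [Finset.mem_filter, Finset.mem_filter]
  constructor
  · rintro ⟨hx, hP1, hP2⟩
    rw [hEx] at hP1
    rcases Finset.mem_insert.1 hx with rfl | hx
    · exfalso
      obtain ⟨y, hy⟩ := hP1
      rw [Finset.mem_inter, Finset.mem_Ioo] at hy
      rcases Finset.mem_insert.1 hy.1 with rfl | hyB
      · omega
      · have := minN_le hyB
        omega
    · have hxπ : x ∈ π := Finset.mem_of_mem_erase hx
      have hxS : x ∈ S := by
        rcases hP2 with h1 | h1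
        · exact (hS x hx).1 h1
        · exfalso
          obtain ⟨y, hy⟩ := h1
          rw [Finset.mem_inter, Finset.mem_Icc] at hy
          have := (h.le_of_mem_mem hxπ hy.1).1
          omega
      refine ⟨hxS, ?_⟩
      obtain ⟨y, hy⟩ := hP1
      rw [Finset.mem_inter, Finset.mem_Ioo] at hy
      have := minN_le hy.1
      omega
  · rintro ⟨hxS, hlt⟩
    have hxπ : x ∈ π := hSπ hxS
    have hxB : x ≠ B := by
      intro hEq; subst hEq; omega
    have hxe : x ∈ π.erase B := Finset.mem_erase.2 ⟨hxB, hxπ⟩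
    refine ⟨Finset.mem_insert_of_mem hxe, ?_, Or.inl ((hS x hxe).2 hxS)⟩
    rw [hEx]
    refine ⟨minN x, ?_⟩
    rw [Finset.mem_inter, Finset.mem_Ioo]
    have hmx : minN x ∈ x := minN_mem (h.nonempty_mem hxπ)
    have := (h.le_of_mem_mem hxπ hmx).1
    exact ⟨hmx, by omega, hlt⟩

/-! ### rc lemmas -/

lemma rc_merge {n e : ℕ} {π S S' : Finset (Finset ℕ)} {B : Finset ℕ}
    (h : IsPart (e+1) n π) (he : 1 ≤ e) (hen : e ≤ n) (hB : B ∈ π) (hBS : B ∈ S) (hSπ : S ⊆ π)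
    (hS : ∀ C ∈ π.erase B, (C ∈ S' ↔ C ∈ S)) :
    rc n (insert (insert e B) (π.erase B)) S' =
      rc n π S + (S.filter fun C => minN C < minN B).card := by
  classical
  have hstep : ∀ k ∈ Finset.Icc 1 n,
      rcAt (insert (insert e B) (π.erase B)) S' k =
        rcAt π S k + if k = e then (S.filter fun C => minN C < minN B).card else 0 := by
    intro k hk
    rcases lt_trichotomy k e with hke | hke | hke
    · rw [if_neg (by omega), rcAt_eq_zero, rcAt_eq_zero]
      · intro B₀ hB₀ hkB₀
        exact absurd (h.le_of_mem_mem hB₀ hkB₀).1 (by omega)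
      · intro B₀ hB₀ hkB₀
        exfalso
        rcases Finset.mem_insert.1 hB₀ with rfl | hB₀
        · rcases Finset.mem_insert.1 hkB₀ with h1 | h1
          · omega
          · exact absurd (h.le_of_mem_mem hB h1).1 (by omega)
        · exact absurd (h.le_of_mem_mem (Finset.mem_of_mem_erase hB₀) hkB₀).1 (by omega)
    · subst hke
      rw [if_pos rfl, rcAt_merge_at h he hB hSπ hS, rcAt_eq_zero, Nat.zero_add]
      intro B₀ hB₀ hkB₀
      exact absurd (h.le_of_mem_mem hB₀ hkB₀).1 (by omega)
    · rw [if_neg (by omega), Nat.add_zero]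
      apply rcAt_merge_gt _ hB hBS _ he hke
      · intro C hC
        exact h.not_mem_of_lt hC (by omega)
      · intro C hC hCB
        exact hS C (Finset.mem_erase.2 ⟨hCB, hC⟩)
  rw [rc, rc, Finset.sum_congr rfl hstep, Finset.sum_add_distrib, Finset.sum_ite_eq' _ e,
    if_pos (by rw [Finset.mem_Icc]; omega)]

lemma rc_addSingleton {n e : ℕ} {π S : Finset (Finset ℕ)}
    (h : IsPart (e+1) n π) (he : 1 ≤ e) :
    rc n (insert {e} π) (insert {e} S) = rc n π S := by
  classical
  rw [rc, rc]
  apply Finset.sum_congr rfl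
  intro k hk
  rcases lt_trichotomy k e with hke | hke | hke
  · rw [rcAt_eq_zero, rcAt_eq_zero]
    · intro B₀ hB₀ hkB₀
      exact absurd (h.le_of_mem_mem hB₀ hkB₀).1 (by omega)
    · intro B₀ hB₀ hkB₀
      exfalso
      rcases Finset.mem_insert.1 hB₀ with rfl | hB₀
      · rw [Finset.mem_singleton] at hkB₀; omega
      · exact absurd (h.le_of_mem_mem hB₀ hkB₀).1 (by omega)
  · subst hke
    rw [rcAt_eq_zero, rcAt_eq_zero]
    · intro B₀ hB₀ hkB₀
      exact absurd (h.le_of_mem_mem hB₀ hkB₀).1 (by omega)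
    · intro B₀ hB₀ hkB₀ j hjB₀ hkj
      rcases Finset.mem_insert.1 hB₀ with rfl | hB₀
      · rw [Finset.mem_singleton] at hjB₀; omega
      · exact absurd (h.le_of_mem_mem hB₀ hkB₀).1 (by omega)
  · apply rcAt_addSingleton_gt _ _ hke
    · intro C hC
      exact h.not_mem_of_lt hC (by omega)
    · intro C hC
      rw [Finset.mem_insert]
      constructor
      · rintro (rfl | h1)
        · exact absurd (Finset.mem_singleton_self e) (h.not_mem_of_lt hC (by omega))
        · exact h1
      · exact Or.inr

lemma rc_empty (n : ℕ) (S : Finset (Finset ℕ)) : rc n ∅ S = 0 := by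
  rw [rc]
  apply Finset.sum_eq_zero
  intro k _
  rw [rcAt, Finset.filter_empty, Finset.card_empty]

/-! ### Partition constructions -/

lemma Icc_eq_insert {e n : ℕ} (hen : e ≤ n) :
    Finset.Icc e n = insert e (Finset.Icc (e+1) n) := by
  rw [Finset.Icc_add_one_left_eq_Ioc, Finset.Ioc_insert_left hen]

lemma IsPart.addSingleton {e n : ℕ} {π : Finset (Finset ℕ)} (h : IsPart (e+1) n π)
    (hen : e ≤ n) : IsPart e n (insert {e} π) := by
  have hsub : Finset.Icc (e+1) n ⊆ Finset.Icc e n :=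
    Finset.Icc_subset_Icc_left (by omega)
  refine ⟨?_, ?_, ?_, ?_⟩
  · intro B hB
    rcases Finset.mem_insert.1 hB with rfl | hB
    · intro x hx
      rw [Finset.mem_singleton] at hx
      subst hx
      rw [Finset.mem_Icc]; omega
    · exact (h.subs B hB).trans hsub
  · intro hmem
    rcases Finset.mem_insert.1 hmem with h1 | h1
    · exact (Finset.singleton_ne_empty e) h1.symm
    · exact h.nem h1
  · intro B hB C hC hne
    rcases Finset.mem_insert.1 hB with rfl | hB <;> rcases Finset.mem_insert.1 hC with rfl | hC
    · exact absurd rfl hne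
    · rw [Finset.disjoint_singleton_left]
      exact h.not_mem_of_lt hC (by omega)
    · rw [Finset.disjoint_singleton_right]
      exact h.not_mem_of_lt hB (by omega)
    · exact h.disj B hB C hC hne
  · rw [Finset.biUnion_insert, h.cover]
    simp only [id_eq]
    rw [← Finset.insert_eq, ← Icc_eq_insert hen]

lemma IsPart.merge {e n : ℕ} {π : Finset (Finset ℕ)} {B : Finset ℕ} (h : IsPart (e+1) n π)
    (hen : e ≤ n) (hB : B ∈ π) : IsPart e n (insert (insert e B) (π.erase B)) := by
  have hsub : Finset.Icc (e+1) n ⊆ Finset.Icc e n :=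
    Finset.Icc_subset_Icc_left (by omega)
  refine ⟨?_, ?_, ?_, ?_⟩
  · intro C hC
    rcases Finset.mem_insert.1 hC with rfl | hC
    · intro x hx
      rcases Finset.mem_insert.1 hx with rfl | hx
      · rw [Finset.mem_Icc]; omega
      · exact hsub (h.subs B hB hx)
    · exact (h.subs C (Finset.mem_of_mem_erase hC)).trans hsub
  · intro hmem
    rcases Finset.mem_insert.1 hmem with h1 | h1
    · exact (Finset.insert_ne_empty e B) h1.symm
    · exact h.nem (Finset.mem_of_mem_erase h1)
  · intro C hC D hD hne
    have key : ∀ D' ∈ π.erase B, Disjoint (insert e B) D' := by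
      intro D' hD'
      rw [Finset.disjoint_left]
      intro x hx hxD'
      have hD'π : D' ∈ π := Finset.mem_of_mem_erase hD'
      rcases Finset.mem_insert.1 hx with rfl | hx
      · exact h.not_mem_of_lt hD'π (by omega) hxD'
      · exact Finset.disjoint_left.1
          (h.disj B hB D' hD'π (Ne.symm (Finset.ne_of_mem_erase hD'))) hx hxD'
    rcases Finset.mem_insert.1 hC with rfl | hC <;> rcases Finset.mem_insert.1 hD with rfl | hD
    · exact absurd rfl hne
    · exact key D hD
    · exact (key C hC).symm
    · exact h.disj C (Finset.mem_of_mem_erase hC) D (Finset.mem_of_mem_erase hD) hne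
  · rw [Finset.biUnion_insert]
    simp only [id_eq]
    have h1 : (π.erase B).biUnion id ∪ B = π.biUnion id := by
      conv_rhs => rw [← Finset.insert_erase hB]
      rw [Finset.biUnion_insert, Finset.union_comm]
      simp only [id_eq]
    have : (insert e B) ∪ (π.erase B).biUnion id =
        insert e (((π.erase B).biUnion id) ∪ B) := by
      rw [Finset.insert_union, Finset.union_comm]
    rw [this, h1, h.cover, ← Icc_eq_insert hen]

lemma IsPart.eraseSingleton {e n : ℕ} {π' : Finset (Finset ℕ)} (h : IsPart e n π')
    (hS : {e} ∈ π') : IsPart (e+1) n (π'.erase {e}) := by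
  have hnot : ∀ C ∈ π'.erase {e}, e ∉ C := by
    intro C hC hEC
    exact Finset.ne_of_mem_erase hC
      (h.eq_of_mem_mem (Finset.mem_of_mem_erase hC) hS hEC (Finset.mem_singleton_self e))
  refine ⟨?_, ?_, ?_, ?_⟩
  · intro C hC x hx
    have h1 := h.subs C (Finset.mem_of_mem_erase hC) hx
    rw [Finset.mem_Icc] at h1 ⊢
    have : x ≠ e := fun hEq => hnot C hC (hEq ▸ hx)
    omega
  · exact fun h1 => h.nem (Finset.mem_of_mem_erase h1)
  · exact fun C hC D hD hne =>
      h.disj C (Finset.mem_of_mem_erase hC) D (Finset.mem_of_mem_erase hD) hne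
  · ext x
    simp only [Finset.mem_biUnion, id]
    constructor
    · rintro ⟨C, hC, hx⟩
      have h1 := h.subs C (Finset.mem_of_mem_erase hC) hx
      rw [Finset.mem_Icc] at h1 ⊢
      have : x ≠ e := fun hEq => hnot C hC (hEq ▸ hx)
      omega
    · intro hx
      have hx' : x ∈ Finset.Icc e n := Finset.Icc_subset_Icc_left (by omega) hx
      obtain ⟨C, hC, hxC⟩ := h.exists_block hx'
      refine ⟨C, Finset.mem_erase.2 ⟨?_, hC⟩, hxC⟩
      rintro rfl
      rw [Finset.mem_singleton] at hxC
      rw [Finset.mem_Icc] at hx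
      omega

lemma IsPart.eraseMerge {e n : ℕ} {π' : Finset (Finset ℕ)} {B' : Finset ℕ} (h : IsPart e n π')
    (hB' : B' ∈ π') (heB' : e ∈ B') (hne : (B'.erase e).Nonempty) :
    IsPart (e+1) n (insert (B'.erase e) (π'.erase B')) := by
  have hnot : ∀ C ∈ π'.erase B', e ∉ C := by
    intro C hC hEC
    exact Finset.ne_of_mem_erase hC
      (h.eq_of_mem_mem (Finset.mem_of_mem_erase hC) hB' hEC heB')
  refine ⟨?_, ?_, ?_, ?_⟩
  · intro C hC x hx
    rcases Finset.mem_insert.1 hC with rfl | hC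
    · have h1 := h.subs B' hB' (Finset.mem_of_mem_erase hx)
      rw [Finset.mem_Icc] at h1 ⊢
      have := Finset.ne_of_mem_erase hx
      omega
    · have h1 := h.subs C (Finset.mem_of_mem_erase hC) hx
      rw [Finset.mem_Icc] at h1 ⊢
      have : x ≠ e := fun hEq => hnot C hC (hEq ▸ hx)
      omega
  · intro hmem
    rcases Finset.mem_insert.1 hmem with h1 | h1
    · rw [← h1] at hne
      exact Finset.not_nonempty_empty hne
    · exact h.nem (Finset.mem_of_mem_erase h1)
  · intro C hC D hD hcd
    have key : ∀ D' ∈ π'.erase B', Disjoint (B'.erase e) D' := by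
      intro D' hD'
      rw [Finset.disjoint_left]
      intro x hx hxD'
      exact Finset.disjoint_left.1
        (h.disj B' hB' D' (Finset.mem_of_mem_erase hD') (Ne.symm (Finset.ne_of_mem_erase hD')))
        (Finset.mem_of_mem_erase hx) hxD'
    rcases Finset.mem_insert.1 hC with rfl | hC <;> rcases Finset.mem_insert.1 hD with rfl | hD
    · exact absurd rfl hcd
    · exact key D hD
    · exact (key C hC).symm
    · exact h.disj C (Finset.mem_of_mem_erase hC) D (Finset.mem_of_mem_erase hD) hcd
  · ext x
    simp only [Finset.mem_biUnion, id, Finset.mem_insert]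
    constructor
    · rintro ⟨C, hC | hC, hx⟩
      · subst hC
        have h1 := h.subs B' hB' (Finset.mem_of_mem_erase hx)
        rw [Finset.mem_Icc] at h1 ⊢
        have := Finset.ne_of_mem_erase hx
        omega
      · have h1 := h.subs C (Finset.mem_of_mem_erase hC) hx
        rw [Finset.mem_Icc] at h1 ⊢
        have : x ≠ e := fun hEq => hnot C hC (hEq ▸ hx)
        omega
    · intro hx
      have hxe : x ≠ e := by rw [Finset.mem_Icc] at hx; omega
      have hx' : x ∈ Finset.Icc e n := Finset.Icc_subset_Icc_left (by omega) hx
      obtain ⟨C, hC, hxC⟩ := h.exists_block hx'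
      by_cases hCB : C = B'
      · subst hCB
        exact ⟨C.erase e, Or.inl rfl, Finset.mem_erase.2 ⟨hxe, hxC⟩⟩
      · exact ⟨C, Or.inr (Finset.mem_erase.2 ⟨hCB, hC⟩), hxC⟩

/-! ### Sorted list lemmas -/

lemma sorted_indexOf (l : List ℕ) (hl : l.Pairwise (· < ·)) {x : ℕ} (hx : x ∈ l) :
    l.idxOf x = (l.filter (fun y => decide (y < x))).length := by
  induction l with
  | nil => cases hx
  | cons a t ih =>
    rw [List.pairwise_cons] at hl
    rcases List.mem_cons.1 hx with rfl | hx
    · rw [List.idxOf_cons_self, List.filter_cons, if_neg (by simp)]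
      have : t.filter (fun y => decide (y < x)) = [] := by
        rw [List.filter_eq_nil_iff]
        intro y hy
        simp only [decide_eq_true_eq]
        exact not_lt.2 (le_of_lt (hl.1 y hy))
      rw [this]
      rfl
    · have hax : a < x := hl.1 x hx
      rw [List.idxOf_cons_ne _ (by omega : a ≠ x), List.filter_cons,
        if_pos (by simpa using hax), List.length_cons, ih hl.2 hx]

lemma length_filter_sort (s : Finset ℕ) (p : ℕ → Prop) [DecidablePred p] :
    (((s.sort (· ≤ ·)).filter (fun y => decide (p y))).length) = (s.filter p).card := by
  classical
  have hnd : ((s.sort (· ≤ ·)).filter (fun y => decide (p y))).Nodup :=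
    (Finset.sort_nodup s _).filter _
  rw [← List.toFinset_card_of_nodup hnd]
  congr 1
  ext y
  simp only [List.mem_toFinset, List.mem_filter, Finset.mem_sort, Finset.mem_filter,
    decide_eq_true_eq]

lemma sort_erase (s : Finset ℕ) (x : ℕ) :
    (s.erase x).sort (· ≤ ·) = ((s.sort (· ≤ ·)).erase x) := by
  classical
  have hnd : ((s.sort (· ≤ ·)).erase x).Nodup := (Finset.sort_nodup s _).erase x
  apply List.Perm.eq_of_pairwise' (Finset.pairwise_sort _ _)
    (List.Pairwise.sublist List.erase_sublist (Finset.pairwise_sort s _))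
  apply List.perm_of_nodup_nodup_toFinset_eq (Finset.sort_nodup _ _) hnd
  ext y
  rw [List.mem_toFinset, List.mem_toFinset, (Finset.sort_nodup s (· ≤ ·)).mem_erase_iff,
    Finset.mem_sort, Finset.mem_sort, Finset.mem_erase]

lemma image_minN_erase {a n : ℕ} {π S : Finset (Finset ℕ)} {B : Finset ℕ}
    (h : IsPart a n π) (hSπ : S ⊆ π) (hB : B ∈ S) :
    (S.erase B).image minN = (S.image minN).erase (minN B) := by
  classical
  ext y
  simp only [Finset.mem_image, Finset.mem_erase]
  constructor
  · rintro ⟨C, ⟨hCB, hCS⟩, rfl⟩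
    exact ⟨fun hEq => hCB (minN_injOn h (hSπ hCS) (hSπ hB) hEq), C, hCS, rfl⟩
  · rintro ⟨hy, C, hC, rfl⟩
    exact ⟨C, ⟨fun hEq => hy (by rw [hEq]), hC⟩, rfl⟩

/-! ### Position lemmas -/

def posS (S : Finset (Finset ℕ)) (B : Finset ℕ) : ℕ :=
  (S.filter fun C => minN C < minN B).card

lemma minN_gt {a n : ℕ} {π : Finset (Finset ℕ)} {C : Finset ℕ}
    (h : IsPart a n π) (hC : C ∈ π) : a ≤ minN C :=
  (h.le_of_mem_mem hC (minN_mem (h.nonempty_mem hC))).1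

lemma sort_insert_of_lt {e : ℕ} {B : Finset ℕ} (h : ∀ x ∈ B, e < x) :
    (insert e B).sort (· ≤ ·) = e :: B.sort (· ≤ ·) :=
  Finset.sort_insert (r := (· ≤ ·)) (fun b hb => le_of_lt (h b hb)) (fun he => lt_irrefl e (h e he))

lemma card_image_minN {a n : ℕ} {π S : Finset (Finset ℕ)}
    (h : IsPart a n π) (hSπ : S ⊆ π) : (S.image minN).card = S.card :=
  Finset.card_image_of_injOn (fun C hC D hD hEq => minN_injOn h (hSπ hC) (hSπ hD) hEq)

lemma posS_lt {a n : ℕ} {π S : Finset (Finset ℕ)} {B : Finset ℕ}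
    (h : IsPart a n π) (hSπ : S ⊆ π) (hB : B ∈ S) : posS S B < S.card := by
  apply Finset.card_lt_card
  rw [Finset.ssubset_iff_of_subset (Finset.filter_subset _ _)]
  exact ⟨B, hB, by simp⟩

lemma filter_image_minN {a n : ℕ} {π S : Finset (Finset ℕ)} {B : Finset ℕ}
    (h : IsPart a n π) (hSπ : S ⊆ π) :
    (S.image minN).filter (fun y => y < minN B) = (S.filter fun C => minN C < minN B).image minN := by
  ext y
  simp only [Finset.mem_filter, Finset.mem_image]
  constructor
  · rintro ⟨⟨C, hC, rfl⟩, hy⟩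
    exact ⟨C, ⟨hC, hy⟩, rfl⟩
  · rintro ⟨C, ⟨hC, hy⟩, rfl⟩
    exact ⟨⟨C, hC, rfl⟩, hy⟩

lemma indexOf_minN {a n : ℕ} {π S : Finset (Finset ℕ)} {B : Finset ℕ}
    (h : IsPart a n π) (hSπ : S ⊆ π) (hB : B ∈ S) :
    ((S.image minN).sort (· ≤ ·)).idxOf (minN B) = posS S B := by
  rw [sorted_indexOf _ (List.sortedLT_iff_pairwise.1 (Finset.sortedLT_sort _)) ((Finset.mem_sort _).2 (Finset.mem_image_of_mem _ hB)),
    length_filter_sort, filter_image_minN h hSπ, posS,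
    Finset.card_image_of_injOn (fun C hC D hD hEq =>
      minN_injOn h (hSπ (Finset.mem_of_mem_filter _ hC)) (hSπ (Finset.mem_of_mem_filter _ hD)) hEq)]

lemma pos_lt_length {a n : ℕ} {π S : Finset (Finset ℕ)} {B : Finset ℕ}
    (h : IsPart a n π) (hSπ : S ⊆ π) (hB : B ∈ S) :
    posS S B < ((S.image minN).sort (· ≤ ·)).length := by
  rw [Finset.length_sort, card_image_minN h hSπ]
  exact posS_lt h hSπ hB

lemma getD_l0 {a n : ℕ} {π S : Finset (Finset ℕ)} {B : Finset ℕ}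
    (h : IsPart a n π) (hSπ : S ⊆ π) (hB : B ∈ S) :
    ((S.image minN).sort (· ≤ ·)).getD (posS S B) 0 = minN B := by
  rw [← indexOf_minN h hSπ hB,
    List.getD_eq_getElem _ _ (by rw [indexOf_minN h hSπ hB]; exact pos_lt_length h hSπ hB)]
  exact List.getElem_idxOf _

lemma eraseIdx_l0 {a n : ℕ} {π S : Finset (Finset ℕ)} {B : Finset ℕ}
    (h : IsPart a n π) (hSπ : S ⊆ π) (hB : B ∈ S) :
    ((S.image minN).sort (· ≤ ·)).eraseIdx (posS S B) = ((S.erase B).image minN).sort (· ≤ ·) := by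
  rw [image_minN_erase h hSπ hB, sort_erase, ← indexOf_minN h hSπ hB]
  exact (List.erase_eq_eraseIdx_of_idxOf rfl).symm

lemma eraseIdx_map' {α β : Type*} (f : α → β) :
    ∀ (l : List α) (k : ℕ), (l.map f).eraseIdx k = (l.eraseIdx k).map f
  | [], _ => rfl
  | _ :: _, 0 => rfl
  | a :: l, (k+1) => by
      rw [List.map_cons, List.eraseIdx_cons_succ, List.eraseIdx_cons_succ, List.map_cons,
        eraseIdx_map' f l k]


variable {H : Type*} [NormedAddCommGroup H] [InnerProductSpace ℂ H]

/-- The pure tensor `η₁ ⊗ ⋯ ⊗ η_m` in the algebraic Fock space `F_alg(H) = ⨁_m H^{⊗m}`,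
realized as the product `ι(η₁)⋯ι(η_m)` in the tensor algebra of `H`; the empty list gives
the vacuum vector `Ω = 1`. -/
def fockTensor (l : List H) : TensorAlgebra ℂ H :=
  (l.map (TensorAlgebra.ι ℂ)).prod

/-- The vector `(Π_{i∈B, i≠max(B)} T_i) ξ_{max(B)}` attached to a block `B`, the operators
being composed in increasing order of the index `i` (leftmost factor has smallest index). -/
def blockVector (T : ℕ → Module.End ℂ H) (ξ : ℕ → H) (B : Finset ℕ) : H :=
  ((((B.sort (· ≤ ·)).filter (fun i => decide (i ≠ maxN B))).map T).prod) (ξ (maxN B))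

def innF (ξ : ℕ → H) (T : ℕ → Module.End ℂ H) (B : Finset ℕ) : ℂ :=
  inner ℂ (ξ (minN B))
    (((((B.sort (· ≤ ·)).filter
          (fun i => decide (i ≠ minN B ∧ i ≠ maxN B))).map T).prod)
      (ξ (maxN B)))

def wt (q : ℝ) (ξ : ℕ → H) (T : ℕ → Module.End ℂ H) (n : ℕ)
    (π S : Finset (Finset ℕ)) : TensorAlgebra ℂ H :=
  ((q : ℂ) ^ rc n π S * ∏ B ∈ π \ S, innF ξ T B) •
    fockTensor (((S.image minN).sort (· ≤ ·)).map (fun m => blockVector T ξ (blockOf π m)))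

lemma blockVector_singleton (T : ℕ → Module.End ℂ H) (ξ : ℕ → H) (e : ℕ) :
    blockVector T ξ {e} = ξ e := by
  rw [blockVector, maxN_singleton, Finset.sort_singleton, List.filter_cons, if_neg (by simp),
    List.filter_nil, List.map_nil, List.prod_nil, Module.End.one_apply]

lemma blockVector_insert_lt {e : ℕ} {B : Finset ℕ} (T : ℕ → Module.End ℂ H) (ξ : ℕ → H)
    (hB : B.Nonempty) (h : ∀ x ∈ B, e < x) :
    blockVector T ξ (insert e B) = T e (blockVector T ξ B) := by
  rw [blockVector, blockVector, maxN_insert_of_lt hB h, sort_insert_of_lt h, List.filter_cons,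
    if_pos (by simp only [decide_eq_true_eq]; have := h _ (maxN_mem hB); omega),
    List.map_cons, List.prod_cons, Module.End.mul_apply]

lemma midVector_insert {e : ℕ} {B : Finset ℕ} (T : ℕ → Module.End ℂ H) (ξ : ℕ → H)
    (hB : B.Nonempty) (h : ∀ x ∈ B, e < x) :
    ((((insert e B).sort (· ≤ ·)).filter
        (fun i => decide (i ≠ minN (insert e B) ∧ i ≠ maxN (insert e B)))).map T).prod
      (ξ (maxN (insert e B))) = blockVector T ξ B := by
  rw [minN_insert_of_lt h, maxN_insert_of_lt hB h, sort_insert_of_lt h, List.filter_cons,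
    if_neg (by simp), blockVector]
  have hfe : (B.sort (· ≤ ·)).filter (fun i => decide (i ≠ e ∧ i ≠ maxN B)) =
      (B.sort (· ≤ ·)).filter (fun i => decide (i ≠ maxN B)) := by
    apply List.filter_congr
    intro i hi
    rw [Finset.mem_sort] at hi
    have := h i hi
    rw [decide_eq_decide]
    constructor
    · rintro ⟨-, h2⟩; exact h2
    · intro h2; exact ⟨by omega, h2⟩
  rw [hfe]

lemma innF_insert {e : ℕ} {B : Finset ℕ} (ξ : ℕ → H) (T : ℕ → Module.End ℂ H)
    (hB : B.Nonempty) (h : ∀ x ∈ B, e < x) :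
    innF ξ T (insert e B) = inner ℂ (ξ e) (blockVector T ξ B) := by
  rw [innF, midVector_insert T ξ hB h, minN_insert_of_lt h]

/-! ### wt transfer lemmas -/

section WtLemmas

variable (q : ℝ) (ξ : ℕ → H) (T : ℕ → Module.End ℂ H)
variable {n e : ℕ} {π S : Finset (Finset ℕ)} {B : Finset ℕ}

lemma singleton_not_mem (h : IsPart (e+1) n π) : ({e} : Finset ℕ) ∉ π :=
  fun hmem => absurd (h.le_of_mem_mem hmem (Finset.mem_singleton_self e)).1 (by omega)

lemma insert_not_mem (h : IsPart (e+1) n π) {B : Finset ℕ} : insert e B ∉ π :=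
  fun hmem => absurd (h.le_of_mem_mem hmem (Finset.mem_insert_self e B)).1 (by omega)

lemma wt_addSingleton_eq (h : IsPart (e+1) n π) (he : 1 ≤ e) (hen : e ≤ n) (hSπ : S ⊆ π) :
    wt q ξ T n (insert {e} π) (insert {e} S) =
      ((q : ℂ) ^ rc n π S * ∏ B ∈ π \ S, innF ξ T B) •
      fockTensor (ξ e ::
        ((S.image minN).sort (· ≤ ·)).map (fun m => blockVector T ξ (blockOf π m))) := by
  have hdiff : (insert {e} π) \ (insert {e} S) = π \ S := by
    ext x
    simp only [Finset.mem_sdiff, Finset.mem_insert]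
    constructor
    · rintro ⟨rfl | hx, h2⟩
      · exact absurd (Or.inl rfl) h2
      · exact ⟨hx, fun hS => h2 (Or.inr hS)⟩
    · rintro ⟨hx, h2⟩
      refine ⟨Or.inr hx, ?_⟩
      rintro (rfl | h3)
      · exact singleton_not_mem h hx
      · exact h2 h3
  have hge : ∀ y ∈ S.image minN, e < y := by
    intro y hy
    obtain ⟨C, hC, rfl⟩ := Finset.mem_image.1 hy
    have := minN_gt h (hSπ hC)
    omega
  have hlist : (((insert {e} S).image minN).sort (· ≤ ·)).map
        (fun m => blockVector T ξ (blockOf (insert {e} π) m)) =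
      ξ e :: ((S.image minN).sort (· ≤ ·)).map (fun m => blockVector T ξ (blockOf π m)) := by
    rw [Finset.image_insert, minN_singleton, sort_insert_of_lt hge, List.map_cons]
    congr 1
    · rw [(h.addSingleton hen).blockOf_eq (Finset.mem_insert_self _ _)
        (Finset.mem_singleton_self e), blockVector_singleton]
    · apply List.map_congr_left
      intro m hm
      rw [Finset.mem_sort] at hm
      obtain ⟨C, hC, rfl⟩ := Finset.mem_image.1 hm
      have hCne := h.nonempty_mem (hSπ hC)
      rw [(h.addSingleton hen).blockOf_eq (Finset.mem_insert_of_mem (hSπ hC)) (minN_mem hCne),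
        h.blockOf_eq (hSπ hC) (minN_mem hCne)]
  rw [wt, rc_addSingleton h he, hdiff, hlist]

lemma wt_mergeOut_eq (h : IsPart (e+1) n π) (he : 1 ≤ e) (hen : e ≤ n) (hSπ : S ⊆ π)
    (hB : B ∈ S) :
    wt q ξ T n (insert (insert e B) (π.erase B)) (S.erase B) =
      (((q : ℂ) ^ rc n π S * ∏ C ∈ π \ S, innF ξ T C) *
        ((q : ℂ) ^ posS S B * (inner ℂ (ξ e) (blockVector T ξ B) : ℂ))) •
      fockTensor ((((S.image minN).sort (· ≤ ·)).map
        (fun m => blockVector T ξ (blockOf π m))).eraseIdx (posS S B)) := by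
  have hBπ : B ∈ π := hSπ hB
  have hBne : B.Nonempty := h.nonempty_mem hBπ
  have hlt : ∀ x ∈ B, e < x := fun x hx => by have := (h.le_of_mem_mem hBπ hx).1; omega
  have hB'π : insert e B ∉ π := insert_not_mem h
  have hSiff : ∀ C ∈ π.erase B, (C ∈ S.erase B ↔ C ∈ S) := by
    intro C hC
    rw [Finset.mem_erase]
    exact ⟨And.right, fun h2 => ⟨Finset.ne_of_mem_erase hC, h2⟩⟩
  have hdiff : (insert (insert e B) (π.erase B)) \ (S.erase B) = insert (insert e B) (π \ S) := by
    ext x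
    simp only [Finset.mem_sdiff, Finset.mem_insert, Finset.mem_erase]
    constructor
    · rintro ⟨rfl | ⟨hxB, hxπ⟩, h2⟩
      · exact Or.inl rfl
      · exact Or.inr ⟨hxπ, fun hxS => h2 ⟨hxB, hxS⟩⟩
    · rintro (rfl | ⟨hxπ, hxS⟩)
      · exact ⟨Or.inl rfl, fun h2 => hB'π (hSπ h2.2)⟩
      · exact ⟨Or.inr ⟨fun hEq => hxS (hEq ▸ hB), hxπ⟩, fun h2 => hxS h2.2⟩
  have hB'nd : insert e B ∉ π \ S := fun h2 => hB'π (Finset.mem_sdiff.1 h2).1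
  rw [wt, rc_merge h he hen hBπ hB hSπ hSiff, hdiff, Finset.prod_insert hB'nd,
    innF_insert ξ T hBne hlt, pow_add]
  congr 1
  · rw [posS]; ring
  · congr 1
    rw [eraseIdx_map', eraseIdx_l0 h hSπ hB]
    apply List.map_congr_left
    intro m hm
    rw [Finset.mem_sort] at hm
    obtain ⟨C, hC, rfl⟩ := Finset.mem_image.1 hm
    obtain ⟨hCB, hCS⟩ := Finset.mem_erase.1 hC
    have hCne := h.nonempty_mem (hSπ hCS)
    rw [(h.merge hen hBπ).blockOf_eq
        (Finset.mem_insert_of_mem (Finset.mem_erase.2 ⟨hCB, hSπ hCS⟩)) (minN_mem hCne),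
      h.blockOf_eq (hSπ hCS) (minN_mem hCne)]

lemma wt_mergeIn_eq (h : IsPart (e+1) n π) (he : 1 ≤ e) (hen : e ≤ n) (hSπ : S ⊆ π)
    (hB : B ∈ S) :
    wt q ξ T n (insert (insert e B) (π.erase B)) (insert (insert e B) (S.erase B)) =
      (((q : ℂ) ^ rc n π S * ∏ C ∈ π \ S, innF ξ T C) * (q : ℂ) ^ posS S B) •
      fockTensor (T e (blockVector T ξ B) ::
        (((S.image minN).sort (· ≤ ·)).map
          (fun m => blockVector T ξ (blockOf π m))).eraseIdx (posS S B)) := by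
  have hBπ : B ∈ π := hSπ hB
  have hBne : B.Nonempty := h.nonempty_mem hBπ
  have hlt : ∀ x ∈ B, e < x := fun x hx => by have := (h.le_of_mem_mem hBπ hx).1; omega
  have hB'π : insert e B ∉ π := insert_not_mem h
  have hSiff : ∀ C ∈ π.erase B, (C ∈ insert (insert e B) (S.erase B) ↔ C ∈ S) := by
    intro C hC
    have hCπ : C ∈ π := Finset.mem_of_mem_erase hC
    rw [Finset.mem_insert, Finset.mem_erase]
    constructor
    · rintro (rfl | ⟨-, h2⟩)
      · exact absurd (Finset.mem_insert_self e B)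
          (fun h3 => h.not_mem_of_lt hCπ (by omega) h3)
      · exact h2
    · intro h2
      exact Or.inr ⟨Finset.ne_of_mem_erase hC, h2⟩
  have hdiff : (insert (insert e B) (π.erase B)) \ (insert (insert e B) (S.erase B)) = π \ S := by
    ext x
    simp only [Finset.mem_sdiff, Finset.mem_insert, Finset.mem_erase]
    constructor
    · rintro ⟨rfl | ⟨hxB, hxπ⟩, h2⟩
      · exact absurd (Or.inl rfl) h2
      · exact ⟨hxπ, fun hxS => h2 (Or.inr ⟨hxB, hxS⟩)⟩
    · rintro ⟨hxπ, hxS⟩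
      refine ⟨Or.inr ⟨fun hEq => hxS (hEq ▸ hB), hxπ⟩, ?_⟩
      rintro (rfl | ⟨-, h2⟩)
      · exact hB'π hxπ
      · exact hxS h2
  have hge : ∀ y ∈ (S.erase B).image minN, e < y := by
    intro y hy
    obtain ⟨C, hC, rfl⟩ := Finset.mem_image.1 hy
    have := minN_gt h (hSπ (Finset.mem_of_mem_erase hC))
    omega
  have hlist : (((insert (insert e B) (S.erase B)).image minN).sort (· ≤ ·)).map
        (fun m => blockVector T ξ (blockOf (insert (insert e B) (π.erase B)) m)) =
      T e (blockVector T ξ B) ::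
        (((S.image minN).sort (· ≤ ·)).map
          (fun m => blockVector T ξ (blockOf π m))).eraseIdx (posS S B) := by
    have himg : (insert (insert e B) (S.erase B)).image minN =
        insert e ((S.erase B).image minN) := by
      rw [Finset.image_insert, minN_insert_of_lt hlt]
    rw [himg, sort_insert_of_lt hge, List.map_cons]
    congr 1
    · rw [(h.merge hen hBπ).blockOf_eq (Finset.mem_insert_self _ _)
        (Finset.mem_insert_self e B), blockVector_insert_lt T ξ hBne hlt]
    · rw [eraseIdx_map', eraseIdx_l0 h hSπ hB]
      apply List.map_congr_left
      intro m hm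
      rw [Finset.mem_sort] at hm
      obtain ⟨C, hC, rfl⟩ := Finset.mem_image.1 hm
      obtain ⟨hCB, hCS⟩ := Finset.mem_erase.1 hC
      have hCne := h.nonempty_mem (hSπ hCS)
      rw [(h.merge hen hBπ).blockOf_eq
          (Finset.mem_insert_of_mem (Finset.mem_erase.2 ⟨hCB, hSπ hCS⟩)) (minN_mem hCne),
        h.blockOf_eq (hSπ hCS) (minN_mem hCne)]
  rw [wt, rc_merge h he hen hBπ hB hSπ hSiff, hdiff, pow_add, hlist]
  congr 1
  rw [posS]; ring

end WtLemmas

/-! ### The extended-partition index sets and bijections -/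

def Spart (π : Finset (Finset ℕ)) : Finset (Finset (Finset ℕ)) :=
  π.powerset.filter (fun S => ∀ B ∈ π, B.card = 1 → B ∈ S)

lemma mem_Spart {π S : Finset (Finset ℕ)} :
    S ∈ Spart π ↔ S ⊆ π ∧ ∀ B ∈ π, B.card = 1 → B ∈ S := by
  rw [Spart, Finset.mem_filter, Finset.mem_powerset]

lemma sum_posS {M : Type*} [AddCommMonoid M] {a n : ℕ} {π S : Finset (Finset ℕ)}
    (h : IsPart a n π) (hSπ : S ⊆ π) (G : ℕ → M) :
    ∑ k ∈ Finset.range S.card, G k = ∑ B ∈ S, G (posS S B) := by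
  symm
  apply Finset.sum_nbij' (i := fun B => posS S B)
    (j := fun k => blockOf π (((S.image minN).sort (· ≤ ·)).getD k 0))
  · intro B hB
    exact Finset.mem_range.2 (posS_lt h hSπ hB)
  · intro k hk
    have hk' : k < ((S.image minN).sort (· ≤ ·)).length := by
      rw [Finset.length_sort, card_image_minN h hSπ]
      exact Finset.mem_range.1 hk
    have hmem : ((S.image minN).sort (· ≤ ·)).getD k 0 ∈ S.image minN := by
      rw [List.getD_eq_getElem _ _ hk']
      exact (Finset.mem_sort _).1 (List.getElem_mem _)
    obtain ⟨C, hC, hCeq⟩ := Finset.mem_image.1 hmem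
    rw [← hCeq, h.blockOf_eq (hSπ hC) (minN_mem (h.nonempty_mem (hSπ hC)))]
    exact hC
  · intro B hB
    rw [getD_l0 h hSπ hB]
    exact h.blockOf_eq (hSπ hB) (minN_mem (h.nonempty_mem (hSπ hB)))
  · intro k hk
    have hk' : k < ((S.image minN).sort (· ≤ ·)).length := by
      rw [Finset.length_sort, card_image_minN h hSπ]
      exact Finset.mem_range.1 hk
    have hmem : ((S.image minN).sort (· ≤ ·)).getD k 0 ∈ S.image minN := by
      rw [List.getD_eq_getElem _ _ hk']
      exact (Finset.mem_sort _).1 (List.getElem_mem _)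
    obtain ⟨C, hC, hCeq⟩ := Finset.mem_image.1 hmem
    rw [← hCeq, h.blockOf_eq (hSπ hC) (minN_mem (h.nonempty_mem (hSπ hC))),
      ← indexOf_minN h hSπ hC, hCeq, List.getD_eq_getElem _ _ hk']
    exact (Finset.sort_nodup _ _).idxOf_getElem k hk'
  · intro B hB
    rfl

section Bijections

variable (q : ℝ) (ξ : ℕ → H) (T : ℕ → Module.End ℂ H)
variable {n e : ℕ}

lemma sum_bij_addSingleton (he : 1 ≤ e) (hen : e ≤ n) :
    ∑ p ∈ (pIcc (e+1) n).sigma (fun π => Spart π),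
        wt q ξ T n (insert {e} p.1) (insert {e} p.2)
      = ∑ p ∈ ((pIcc e n).sigma (fun π => Spart π)).filter (fun p => {e} ∈ p.1),
          wt q ξ T n p.1 p.2 := by
  apply Finset.sum_nbij' (i := fun p => ⟨insert {e} p.1, insert {e} p.2⟩)
    (j := fun p => ⟨p.1.erase {e}, p.2.erase {e}⟩)
  · rintro ⟨π, S⟩ hp
    rw [Finset.mem_sigma] at hp
    have hπ := mem_pIcc.1 hp.1
    obtain ⟨hSπ, hsing⟩ := mem_Spart.1 hp.2
    rw [Finset.mem_filter, Finset.mem_sigma]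
    refine ⟨⟨mem_pIcc.2 (hπ.addSingleton hen), mem_Spart.2 ⟨Finset.insert_subset_insert _ hSπ, ?_⟩⟩,
      Finset.mem_insert_self _ _⟩
    intro C hC hcard
    rcases Finset.mem_insert.1 hC with rfl | hC
    · exact Finset.mem_insert_self _ _
    · exact Finset.mem_insert_of_mem (hsing C hC hcard)
  · rintro ⟨π, S⟩ hp
    rw [Finset.mem_filter, Finset.mem_sigma] at hp
    obtain ⟨⟨hπ, hS⟩, hsingmem⟩ := hp
    have hπ' := mem_pIcc.1 hπ
    obtain ⟨hSπ, hsing⟩ := mem_Spart.1 hS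
    rw [Finset.mem_sigma]
    refine ⟨mem_pIcc.2 (hπ'.eraseSingleton hsingmem), mem_Spart.2 ⟨?_, ?_⟩⟩
    · exact Finset.erase_subset_erase _ hSπ
    · intro C hC hcard
      exact Finset.mem_erase.2 ⟨Finset.ne_of_mem_erase hC,
        hsing C (Finset.mem_of_mem_erase hC) hcard⟩
  · rintro ⟨π, S⟩ hp
    rw [Finset.mem_sigma] at hp
    have hπ := mem_pIcc.1 hp.1
    have hSπ := (mem_Spart.1 hp.2).1
    have h1 : ({e} : Finset ℕ) ∉ π := singleton_not_mem hπ
    have h2 : ({e} : Finset ℕ) ∉ S := fun hc => h1 (hSπ hc)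
    rw [Finset.erase_insert h1, Finset.erase_insert h2]
  · rintro ⟨π, S⟩ hp
    rw [Finset.mem_filter, Finset.mem_sigma] at hp
    obtain ⟨⟨hπ, hS⟩, hsingmem⟩ := hp
    obtain ⟨hSπ, hsing⟩ := mem_Spart.1 hS
    have h2 : ({e} : Finset ℕ) ∈ S := hsing _ hsingmem (Finset.card_singleton e)
    rw [Finset.insert_erase hsingmem, Finset.insert_erase h2]
  · intro p _
    rfl

lemma erase_nonempty_of_ne_singleton {B : Finset ℕ} {e : ℕ} (heB : e ∈ B) (hne : B ≠ {e}) :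
    (B.erase e).Nonempty := by
  rw [Finset.nonempty_iff_ne_empty]
  intro hEq
  apply hne
  ext y
  rw [Finset.mem_singleton]
  constructor
  · intro hy
    by_contra hc
    have hy' : y ∈ B.erase e := Finset.mem_erase.2 ⟨hc, hy⟩
    rw [hEq] at hy'
    exact Finset.notMem_empty y hy'
  · rintro rfl; exact heB

lemma sum_bij_mergeOut (he : 1 ≤ e) (hen : e ≤ n) :
    ∑ t ∈ ((pIcc (e+1) n).sigma (fun π => Spart π)).sigma (fun p => p.2),
        wt q ξ T n (insert (insert e t.2) (t.1.1.erase t.2)) (t.1.2.erase t.2)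
      = ∑ p ∈ ((pIcc e n).sigma (fun π => Spart π)).filter
            (fun p => ¬ {e} ∈ p.1 ∧ ¬ blockOf p.1 e ∈ p.2),
          wt q ξ T n p.1 p.2 := by
  apply Finset.sum_nbij'
    (i := fun t => ⟨insert (insert e t.2) (t.1.1.erase t.2), t.1.2.erase t.2⟩)
    (j := fun p => ⟨⟨insert ((blockOf p.1 e).erase e) (p.1.erase (blockOf p.1 e)),
      insert ((blockOf p.1 e).erase e) p.2⟩, (blockOf p.1 e).erase e⟩)
  · rintro ⟨⟨π, S⟩, B⟩ ht
    rw [Finset.mem_sigma, Finset.mem_sigma] at ht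
    obtain ⟨⟨hπ, hS⟩, hB⟩ := ht
    have hπ' := mem_pIcc.1 hπ
    obtain ⟨hSπ, hsing⟩ := mem_Spart.1 hS
    have hBπ : B ∈ π := hSπ hB
    have hBne : B.Nonempty := hπ'.nonempty_mem hBπ
    have heB : e ∉ B := hπ'.not_mem_of_lt hBπ (by omega)
    have hcard2 : (insert e B).card ≠ 1 := by
      rw [Finset.card_insert_of_notMem heB]
      have := Finset.Nonempty.card_pos hBne
      omega
    rw [Finset.mem_filter, Finset.mem_sigma]
    refine ⟨⟨mem_pIcc.2 (hπ'.merge hen hBπ), mem_Spart.2 ⟨?_, ?_⟩⟩, ?_, ?_⟩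
    · intro C hC
      obtain ⟨hCB, hCS⟩ := Finset.mem_erase.1 hC
      exact Finset.mem_insert_of_mem (Finset.mem_erase.2 ⟨hCB, hSπ hCS⟩)
    · intro C hC hcard
      rcases Finset.mem_insert.1 hC with rfl | hC
      · exact absurd hcard hcard2
      · exact Finset.mem_erase.2 ⟨Finset.ne_of_mem_erase hC,
          hsing C (Finset.mem_of_mem_erase hC) hcard⟩
    · intro hc
      rcases Finset.mem_insert.1 hc with h1 | h1
      · exact hcard2 (by rw [← h1]; exact Finset.card_singleton e)
      · exact singleton_not_mem hπ' (Finset.mem_of_mem_erase h1)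
    · intro hc
      have hblock : blockOf (insert (insert e B) (π.erase B)) e = insert e B :=
        (hπ'.merge hen hBπ).blockOf_eq (Finset.mem_insert_self _ _) (Finset.mem_insert_self e B)
      rw [hblock] at hc
      exact insert_not_mem hπ' (hSπ (Finset.mem_of_mem_erase hc))
  · rintro ⟨π, S⟩ hp
    rw [Finset.mem_filter, Finset.mem_sigma] at hp
    obtain ⟨⟨hπ, hS⟩, hnotsing, hnotS⟩ := hp
    have hπ' := mem_pIcc.1 hπ
    obtain ⟨hSπ, hsing⟩ := mem_Spart.1 hS
    obtain ⟨C₀, hC₀, heC₀⟩ := hπ'.exists_block (Finset.mem_Icc.2 ⟨le_rfl, hen⟩)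
    have hblock := hπ'.blockOf_eq hC₀ heC₀
    have hBmem : blockOf π e ∈ π := by rw [hblock]; exact hC₀
    have heB : e ∈ blockOf π e := by rw [hblock]; exact heC₀
    have hBne : ((blockOf π e).erase e).Nonempty :=
      erase_nonempty_of_ne_singleton heB (fun hEq => hnotsing (hEq ▸ hBmem))
    rw [Finset.mem_sigma, Finset.mem_sigma]
    refine ⟨⟨mem_pIcc.2 (hπ'.eraseMerge hBmem heB hBne), mem_Spart.2 ⟨?_, ?_⟩⟩,
      Finset.mem_insert_self _ _⟩
    · intro C hC
      rcases Finset.mem_insert.1 hC with rfl | hC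
      · exact Finset.mem_insert_self _ _
      · exact Finset.mem_insert_of_mem (Finset.mem_erase.2
          ⟨fun hEq => hnotS (hEq ▸ hC), hSπ hC⟩)
    · intro C hC hcard
      rcases Finset.mem_insert.1 hC with rfl | hC
      · exact Finset.mem_insert_self _ _
      · exact Finset.mem_insert_of_mem (hsing C (Finset.mem_of_mem_erase hC) hcard)
  · rintro ⟨⟨π, S⟩, B⟩ ht
    rw [Finset.mem_sigma, Finset.mem_sigma] at ht
    obtain ⟨⟨hπ, hS⟩, hB⟩ := ht
    have hπ' := mem_pIcc.1 hπ
    obtain ⟨hSπ, hsing⟩ := mem_Spart.1 hS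
    have hBπ : B ∈ π := hSπ hB
    have heB : e ∉ B := hπ'.not_mem_of_lt hBπ (by omega)
    have hblock : blockOf (insert (insert e B) (π.erase B)) e = insert e B :=
      (hπ'.merge hen hBπ).blockOf_eq (Finset.mem_insert_self _ _) (Finset.mem_insert_self e B)
    have hB'ne : insert e B ∉ π.erase B :=
      fun hc => insert_not_mem hπ' (Finset.mem_of_mem_erase hc)
    simp only [hblock, Finset.erase_insert heB, Finset.erase_insert hB'ne,
      Finset.insert_erase hBπ, Finset.insert_erase hB]
  · rintro ⟨π, S⟩ hp
    rw [Finset.mem_filter, Finset.mem_sigma] at hp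
    obtain ⟨⟨hπ, hS⟩, hnotsing, hnotS⟩ := hp
    have hπ' := mem_pIcc.1 hπ
    obtain ⟨hSπ, hsing⟩ := mem_Spart.1 hS
    obtain ⟨C₀, hC₀, heC₀⟩ := hπ'.exists_block (Finset.mem_Icc.2 ⟨le_rfl, hen⟩)
    have hblock := hπ'.blockOf_eq hC₀ heC₀
    have hBmem : blockOf π e ∈ π := by rw [hblock]; exact hC₀
    have heB : e ∈ blockOf π e := by rw [hblock]; exact heC₀
    have hBne : ((blockOf π e).erase e).Nonempty :=
      erase_nonempty_of_ne_singleton heB (fun hEq => hnotsing (hEq ▸ hBmem))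
    have hBout : (blockOf π e).erase e ∉ π := by
      intro hc
      obtain ⟨x, hx⟩ := hBne
      have hxB' : x ∈ blockOf π e := Finset.mem_of_mem_erase hx
      have hEq := hπ'.eq_of_mem_mem hc hBmem hx hxB'
      apply Finset.notMem_erase e (blockOf π e)
      rw [hEq]
      exact heB
    have h1 : ((insert ((blockOf π e).erase e) (π.erase (blockOf π e))).erase
        ((blockOf π e).erase e)) = π.erase (blockOf π e) :=
      Finset.erase_insert (fun hc => hBout (Finset.mem_of_mem_erase hc))
    have h2 : insert e ((blockOf π e).erase e) = blockOf π e := Finset.insert_erase heB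
    have h3 : (insert ((blockOf π e).erase e) S).erase ((blockOf π e).erase e) = S :=
      Finset.erase_insert (fun hc => hBout (hSπ hc))
    simp only [h1, h2, h3, Finset.insert_erase hBmem]
  · intro t _
    rfl

lemma sum_bij_mergeIn (he : 1 ≤ e) (hen : e ≤ n) :
    ∑ t ∈ ((pIcc (e+1) n).sigma (fun π => Spart π)).sigma (fun p => p.2),
        wt q ξ T n (insert (insert e t.2) (t.1.1.erase t.2))
          (insert (insert e t.2) (t.1.2.erase t.2))
      = ∑ p ∈ ((pIcc e n).sigma (fun π => Spart π)).filter
            (fun p => ¬ {e} ∈ p.1 ∧ blockOf p.1 e ∈ p.2),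
          wt q ξ T n p.1 p.2 := by
  apply Finset.sum_nbij'
    (i := fun t => ⟨insert (insert e t.2) (t.1.1.erase t.2),
      insert (insert e t.2) (t.1.2.erase t.2)⟩)
    (j := fun p => ⟨⟨insert ((blockOf p.1 e).erase e) (p.1.erase (blockOf p.1 e)),
      insert ((blockOf p.1 e).erase e) (p.2.erase (blockOf p.1 e))⟩, (blockOf p.1 e).erase e⟩)
  · rintro ⟨⟨π, S⟩, B⟩ ht
    rw [Finset.mem_sigma, Finset.mem_sigma] at ht
    obtain ⟨⟨hπ, hS⟩, hB⟩ := ht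
    have hπ' := mem_pIcc.1 hπ
    obtain ⟨hSπ, hsing⟩ := mem_Spart.1 hS
    have hBπ : B ∈ π := hSπ hB
    have hBne : B.Nonempty := hπ'.nonempty_mem hBπ
    have heB : e ∉ B := hπ'.not_mem_of_lt hBπ (by omega)
    have hcard2 : (insert e B).card ≠ 1 := by
      rw [Finset.card_insert_of_notMem heB]
      have := Finset.Nonempty.card_pos hBne
      omega
    have hblock : blockOf (insert (insert e B) (π.erase B)) e = insert e B :=
      (hπ'.merge hen hBπ).blockOf_eq (Finset.mem_insert_self _ _) (Finset.mem_insert_self e B)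
    rw [Finset.mem_filter, Finset.mem_sigma]
    refine ⟨⟨mem_pIcc.2 (hπ'.merge hen hBπ), mem_Spart.2 ⟨?_, ?_⟩⟩, ?_, ?_⟩
    · intro C hC
      rcases Finset.mem_insert.1 hC with rfl | hC
      · exact Finset.mem_insert_self _ _
      · obtain ⟨hCB, hCS⟩ := Finset.mem_erase.1 hC
        exact Finset.mem_insert_of_mem (Finset.mem_erase.2 ⟨hCB, hSπ hCS⟩)
    · intro C hC hcard
      rcases Finset.mem_insert.1 hC with rfl | hC
      · exact absurd hcard hcard2
      · exact Finset.mem_insert_of_mem (Finset.mem_erase.2 ⟨Finset.ne_of_mem_erase hC,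
          hsing C (Finset.mem_of_mem_erase hC) hcard⟩)
    · intro hc
      rcases Finset.mem_insert.1 hc with h1 | h1
      · exact hcard2 (by rw [← h1]; exact Finset.card_singleton e)
      · exact singleton_not_mem hπ' (Finset.mem_of_mem_erase h1)
    · rw [hblock]
      exact Finset.mem_insert_self _ _
  · rintro ⟨π, S⟩ hp
    rw [Finset.mem_filter, Finset.mem_sigma] at hp
    obtain ⟨⟨hπ, hS⟩, hnotsing, hinS⟩ := hp
    have hπ' := mem_pIcc.1 hπ
    obtain ⟨hSπ, hsing⟩ := mem_Spart.1 hS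
    obtain ⟨C₀, hC₀, heC₀⟩ := hπ'.exists_block (Finset.mem_Icc.2 ⟨le_rfl, hen⟩)
    have hblock := hπ'.blockOf_eq hC₀ heC₀
    have hBmem : blockOf π e ∈ π := by rw [hblock]; exact hC₀
    have heB : e ∈ blockOf π e := by rw [hblock]; exact heC₀
    have hBne : ((blockOf π e).erase e).Nonempty :=
      erase_nonempty_of_ne_singleton heB (fun hEq => hnotsing (hEq ▸ hBmem))
    rw [Finset.mem_sigma, Finset.mem_sigma]
    refine ⟨⟨mem_pIcc.2 (hπ'.eraseMerge hBmem heB hBne), mem_Spart.2 ⟨?_, ?_⟩⟩,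
      Finset.mem_insert_self _ _⟩
    · intro C hC
      rcases Finset.mem_insert.1 hC with rfl | hC
      · exact Finset.mem_insert_self _ _
      · obtain ⟨hCB, hCS⟩ := Finset.mem_erase.1 hC
        exact Finset.mem_insert_of_mem (Finset.mem_erase.2 ⟨hCB, hSπ hCS⟩)
    · intro C hC hcard
      rcases Finset.mem_insert.1 hC with rfl | hC
      · exact Finset.mem_insert_self _ _
      · exact Finset.mem_insert_of_mem (Finset.mem_erase.2
          ⟨Finset.ne_of_mem_erase hC, hsing C (Finset.mem_of_mem_erase hC) hcard⟩)
  · rintro ⟨⟨π, S⟩, B⟩ ht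
    rw [Finset.mem_sigma, Finset.mem_sigma] at ht
    obtain ⟨⟨hπ, hS⟩, hB⟩ := ht
    have hπ' := mem_pIcc.1 hπ
    obtain ⟨hSπ, hsing⟩ := mem_Spart.1 hS
    have hBπ : B ∈ π := hSπ hB
    have heB : e ∉ B := hπ'.not_mem_of_lt hBπ (by omega)
    have hblock : blockOf (insert (insert e B) (π.erase B)) e = insert e B :=
      (hπ'.merge hen hBπ).blockOf_eq (Finset.mem_insert_self _ _) (Finset.mem_insert_self e B)
    have hB'ne : insert e B ∉ π.erase B :=
      fun hc => insert_not_mem hπ' (Finset.mem_of_mem_erase hc)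
    have hB'nS : insert e B ∉ S.erase B := fun hc =>
      insert_not_mem hπ' (hSπ (Finset.mem_of_mem_erase hc))
    simp only [hblock, Finset.erase_insert heB, Finset.erase_insert hB'ne,
      Finset.erase_insert hB'nS, Finset.insert_erase hBπ, Finset.insert_erase hB]
  · rintro ⟨π, S⟩ hp
    rw [Finset.mem_filter, Finset.mem_sigma] at hp
    obtain ⟨⟨hπ, hS⟩, hnotsing, hinS⟩ := hp
    have hπ' := mem_pIcc.1 hπ
    obtain ⟨hSπ, hsing⟩ := mem_Spart.1 hS
    obtain ⟨C₀, hC₀, heC₀⟩ := hπ'.exists_block (Finset.mem_Icc.2 ⟨le_rfl, hen⟩)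
    have hblock := hπ'.blockOf_eq hC₀ heC₀
    have hBmem : blockOf π e ∈ π := by rw [hblock]; exact hC₀
    have heB : e ∈ blockOf π e := by rw [hblock]; exact heC₀
    have hBne : ((blockOf π e).erase e).Nonempty :=
      erase_nonempty_of_ne_singleton heB (fun hEq => hnotsing (hEq ▸ hBmem))
    have hBout : (blockOf π e).erase e ∉ π := by
      intro hc
      obtain ⟨x, hx⟩ := hBne
      have hxB' : x ∈ blockOf π e := Finset.mem_of_mem_erase hx
      have hEq := hπ'.eq_of_mem_mem hc hBmem hx hxB'
      apply Finset.notMem_erase e (blockOf π e)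
      rw [hEq]
      exact heB
    have h1 : ((insert ((blockOf π e).erase e) (π.erase (blockOf π e))).erase
        ((blockOf π e).erase e)) = π.erase (blockOf π e) :=
      Finset.erase_insert (fun hc => hBout (Finset.mem_of_mem_erase hc))
    have h2 : insert e ((blockOf π e).erase e) = blockOf π e := Finset.insert_erase heB
    have h3 : ((insert ((blockOf π e).erase e) (S.erase (blockOf π e))).erase
        ((blockOf π e).erase e)) = S.erase (blockOf π e) :=
      Finset.erase_insert (fun hc => hBout (hSπ (Finset.mem_of_mem_erase hc)))
    simp only [h1, h2, h3, Finset.insert_erase hBmem, Finset.insert_erase hinS]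
  · intro t _
    rfl

end Bijections

/-! ### The inductive step -/

section Step

variable (q : ℝ) (ξ : ℕ → H) (T : ℕ → Module.End ℂ H)
variable (astar ann : H → Module.End ℂ (TensorAlgebra ℂ H))
variable (gauge : Module.End ℂ H → Module.End ℂ (TensorAlgebra ℂ H))
variable (hastar : ∀ (ζ : H) (l : List H), astar ζ (fockTensor l) = fockTensor (ζ :: l))
variable (hann : ∀ (ζ : H) (l : List H),
      ann ζ (fockTensor l) =
        ∑ k ∈ Finset.range l.length,
          ((q : ℂ) ^ k * inner ℂ ζ (l.getD k 0)) • fockTensor (l.eraseIdx k))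
variable (hgauge : ∀ (Tm : Module.End ℂ H) (l : List H),
      gauge Tm (fockTensor l) =
        ∑ k ∈ Finset.range l.length,
          (q : ℂ) ^ k • fockTensor (Tm (l.getD k 0) :: l.eraseIdx k))

include hastar hann hgauge in
lemma step {n e : ℕ} (he : 1 ≤ e) (hen : e ≤ n) :
    (ann (ξ e) + astar (ξ e) + gauge (T e))
        (∑ p ∈ (pIcc (e+1) n).sigma (fun π => Spart π), wt q ξ T n p.1 p.2)
      = ∑ p ∈ (pIcc e n).sigma (fun π => Spart π), wt q ξ T n p.1 p.2 := by
  have key : ∀ p ∈ (pIcc (e+1) n).sigma (fun π => Spart π),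
      (ann (ξ e) + astar (ξ e) + gauge (T e)) (wt q ξ T n p.1 p.2)
        = (∑ B ∈ p.2, wt q ξ T n (insert (insert e B) (p.1.erase B)) (p.2.erase B))
          + wt q ξ T n (insert {e} p.1) (insert {e} p.2)
          + ∑ B ∈ p.2,
              wt q ξ T n (insert (insert e B) (p.1.erase B)) (insert (insert e B) (p.2.erase B)) := by
    rintro ⟨π, S⟩ hp
    rw [Finset.mem_sigma] at hp
    have hπ' := mem_pIcc.1 hp.1
    obtain ⟨hSπ, hsing⟩ := mem_Spart.1 hp.2
    have hgetD : ∀ B ∈ S,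
        (((S.image minN).sort (· ≤ ·)).map
          (fun m => blockVector T ξ (blockOf π m))).getD (posS S B) 0 = blockVector T ξ B := by
      intro B hB
      have hpos := pos_lt_length hπ' hSπ hB
      have hpos' : posS S B < (((S.image minN).sort (· ≤ ·)).map
          (fun m => blockVector T ξ (blockOf π m))).length := by
        rw [List.length_map]; exact hpos
      rw [List.getD_eq_getElem _ _ hpos', List.getElem_map, ← List.getD_eq_getElem _ _ hpos,
        getD_l0 hπ' hSπ hB, hπ'.blockOf_eq (hSπ hB) (minN_mem (hπ'.nonempty_mem (hSπ hB)))]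
    have hlen : (((S.image minN).sort (· ≤ ·)).map
        (fun m => blockVector T ξ (blockOf π m))).length = S.card := by
      rw [List.length_map, Finset.length_sort, card_image_minN hπ' hSπ]
    have hAnn : ann (ξ e) (wt q ξ T n π S) =
        ∑ B ∈ S, wt q ξ T n (insert (insert e B) (π.erase B)) (S.erase B) := by
      rw [wt, map_smul, hann, hlen, sum_posS hπ' hSπ, Finset.smul_sum]
      apply Finset.sum_congr rfl
      intro B hB
      rw [hgetD B hB, smul_smul, wt_mergeOut_eq q ξ T hπ' he hen hSπ hB]
    have hA : astar (ξ e) (wt q ξ T n π S) = wt q ξ T n (insert {e} π) (insert {e} S) := by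
      rw [wt, map_smul, hastar, wt_addSingleton_eq q ξ T hπ' he hen hSπ]
    have hG : gauge (T e) (wt q ξ T n π S) =
        ∑ B ∈ S, wt q ξ T n (insert (insert e B) (π.erase B))
          (insert (insert e B) (S.erase B)) := by
      rw [wt, map_smul, hgauge, hlen, sum_posS hπ' hSπ, Finset.smul_sum]
      apply Finset.sum_congr rfl
      intro B hB
      rw [hgetD B hB, smul_smul, wt_mergeIn_eq q ξ T hπ' he hen hSπ hB]
    rw [LinearMap.add_apply, LinearMap.add_apply, hAnn, hA, hG]
  rw [map_sum, Finset.sum_congr rfl key, Finset.sum_add_distrib, Finset.sum_add_distrib,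
    Finset.sum_sigma' ((pIcc (e+1) n).sigma fun π => Spart π) (fun p => p.2),
    Finset.sum_sigma' ((pIcc (e+1) n).sigma fun π => Spart π) (fun p => p.2),
    sum_bij_mergeOut q ξ T he hen, sum_bij_addSingleton q ξ T he hen,
    sum_bij_mergeIn q ξ T he hen,
    ← Finset.sum_filter_add_sum_filter_not ((pIcc e n).sigma fun π => Spart π)
      (fun p => {e} ∈ p.1) (fun p => wt q ξ T n p.1 p.2),
    ← Finset.sum_filter_add_sum_filter_not
      (((pIcc e n).sigma fun π => Spart π).filter (fun p => ¬ {e} ∈ p.1))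
      (fun p => blockOf p.1 e ∈ p.2) (fun p => wt q ξ T n p.1 p.2),
    Finset.filter_filter, Finset.filter_filter]
  abel

end Step

/-! ### Base case and induction -/

lemma pIcc_of_gt {a n : ℕ} (hna : n < a) : pIcc a n = {∅} := by
  ext π
  rw [mem_pIcc, Finset.mem_singleton]
  constructor
  · intro hp
    rw [Finset.eq_empty_iff_forall_notMem]
    intro B hB
    obtain ⟨x, hx⟩ := hp.nonempty_mem hB
    have h1 := hp.subs B hB hx
    rw [Finset.mem_Icc] at h1
    omega
  · rintro rfl
    refine ⟨fun B hB => absurd hB (Finset.notMem_empty B), Finset.notMem_empty ∅,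
      fun B hB => absurd hB (Finset.notMem_empty B), ?_⟩
    rw [Finset.biUnion_empty]
    symm
    exact Finset.Icc_eq_empty (by omega)

lemma Spart_empty : Spart ∅ = {∅} := by
  ext S
  rw [mem_Spart, Finset.mem_singleton]
  constructor
  · rintro ⟨h1, -⟩
    exact Finset.subset_empty.1 h1
  · rintro rfl
    exact ⟨Finset.Subset.refl _, fun B hB => absurd hB (Finset.notMem_empty B)⟩

lemma sum_base (q : ℝ) (ξ : ℕ → H) (T : ℕ → Module.End ℂ H) (n : ℕ) :
    ∑ p ∈ ((pIcc (n+1) n).sigma fun π => Spart π), wt q ξ T n p.1 p.2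
      = fockTensor ([] : List H) := by
  rw [← Finset.sum_sigma', pIcc_of_gt (by omega), Finset.sum_singleton, Spart_empty,
    Finset.sum_singleton]
  rw [wt, rc_empty, pow_zero, Finset.sdiff_empty, Finset.prod_empty, mul_one, one_smul,
    Finset.image_empty, Finset.sort_empty, List.map_nil]

section Main

variable (q : ℝ) (ξ : ℕ → H) (T : ℕ → Module.End ℂ H)
variable (astar ann : H → Module.End ℂ (TensorAlgebra ℂ H))
variable (gauge : Module.End ℂ H → Module.End ℂ (TensorAlgebra ℂ H))
variable (hastar : ∀ (ζ : H) (l : List H), astar ζ (fockTensor l) = fockTensor (ζ :: l))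
variable (hann : ∀ (ζ : H) (l : List H),
      ann ζ (fockTensor l) =
        ∑ k ∈ Finset.range l.length,
          ((q : ℂ) ^ k * inner ℂ ζ (l.getD k 0)) • fockTensor (l.eraseIdx k))
variable (hgauge : ∀ (Tm : Module.End ℂ H) (l : List H),
      gauge Tm (fockTensor l) =
        ∑ k ∈ Finset.range l.length,
          (q : ℂ) ^ k • fockTensor (Tm (l.getD k 0) :: l.eraseIdx k))

include hastar hann hgauge in
lemma main_induction (n : ℕ) :
    ∀ d, d ≤ n →
      ((List.range d).map (fun i => ann (ξ (n - d + 1 + i)) + astar (ξ (n - d + 1 + i)) +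
          gauge (T (n - d + 1 + i)))).prod (fockTensor ([] : List H))
        = ∑ p ∈ (pIcc (n - d + 1) n).sigma (fun π => Spart π), wt q ξ T n p.1 p.2 := by
  intro d
  induction d with
  | zero =>
    intro _
    rw [List.range_zero, List.map_nil, List.prod_nil, Module.End.one_apply, Nat.sub_zero,
      sum_base]
  | succ d ih =>
    intro hd1
    have hd : d ≤ n := by omega
    have heq : n - (d+1) + 1 = n - d := by omega
    rw [List.range_succ_eq_map, List.map_cons, List.prod_cons, Module.End.mul_apply, List.map_map]
    have hmap : (List.range d).map ((fun i => ann (ξ (n - (d+1) + 1 + i)) +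
          astar (ξ (n - (d+1) + 1 + i)) + gauge (T (n - (d+1) + 1 + i))) ∘ Nat.succ) =
        (List.range d).map (fun i => ann (ξ (n - d + 1 + i)) + astar (ξ (n - d + 1 + i)) +
          gauge (T (n - d + 1 + i))) := by
      apply List.map_congr_left
      intro a _
      show ann (ξ (n - (d+1) + 1 + Nat.succ a)) + astar (ξ (n - (d+1) + 1 + Nat.succ a)) +
        gauge (T (n - (d+1) + 1 + Nat.succ a)) = _
      have h1 : n - (d+1) + 1 + Nat.succ a = n - d + 1 + a := by omega
      rw [h1]
    rw [hmap, ih hd]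
    show (ann (ξ (n - (d+1) + 1 + 0)) + astar (ξ (n - (d+1) + 1 + 0)) +
      gauge (T (n - (d+1) + 1 + 0))) _ = _
    have h0 : n - (d+1) + 1 + 0 = n - d := by omega
    rw [h0]
    exact step q ξ T astar ann gauge hastar hann hgauge (by omega) (by omega)

end Main

/-- Vacuum evaluation of the Wick-product expansion: for
`ξ₁,…,ξₙ ∈ H` and linear maps `T₁,…,Tₙ : H → H`,
`Π_{i=1}^n (a(ξᵢ) + a*(ξᵢ) + p(Tᵢ)) Ω
  = Σ_{π∈Part(n)} Σ_{Sing(π)⊆S⊆π} q^{rc(S,π)}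
      Π_{B∈π∖S} ⟨ξ_{min B}, (Π_{i∈B,i≠min B,max B} Tᵢ) ξ_{max B}⟩
      ⊗_{B∈S} (Π_{i∈B,i≠max B} Tᵢ) ξ_{max B}`,
the tensor factors being ordered by increasing `min(B)`. -/
theorem product_on_vacuum_partition_expansion (q : ℝ) (hq : -1 < q) (hq' : q < 1)
    (astar ann : H → Module.End ℂ (TensorAlgebra ℂ H))
    (gauge : Module.End ℂ H → Module.End ℂ (TensorAlgebra ℂ H))
    (hastar : ∀ (ζ : H) (l : List H), astar ζ (fockTensor l) = fockTensor (ζ :: l))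
    (hann : ∀ (ζ : H) (l : List H),
      ann ζ (fockTensor l) =
        ∑ k ∈ Finset.range l.length,
          ((q : ℂ) ^ k * inner ℂ ζ (l.getD k 0)) • fockTensor (l.eraseIdx k))
    (hgauge : ∀ (T : Module.End ℂ H) (l : List H),
      gauge T (fockTensor l) =
        ∑ k ∈ Finset.range l.length,
          (q : ℂ) ^ k • fockTensor (T (l.getD k 0) :: l.eraseIdx k))
    (n : ℕ) (ξ : ℕ → H) (T : ℕ → Module.End ℂ H) :
    ((List.range n).map
        (fun i => ann (ξ (i + 1)) + astar (ξ (i + 1)) + gauge (T (i + 1)))).prod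
        (fockTensor ([] : List H))
      = ∑ π ∈ partitionsOf n,
          ∑ S ∈ π.powerset.filter (fun S => ∀ B ∈ π, B.card = 1 → B ∈ S),
            ((q : ℂ) ^ rc n π S *
              ∏ B ∈ π \ S,
                inner ℂ (ξ (minN B))
                  (((((B.sort (· ≤ ·)).filter
                        (fun i => decide (i ≠ minN B ∧ i ≠ maxN B))).map T).prod)
                    (ξ (maxN B)))) •
            fockTensor
              (((S.image minN).sort (· ≤ ·)).map
                (fun m => blockVector T ξ (blockOf π m))) := by
  have hmain := main_induction q ξ T astar ann gauge hastar hann hgauge n n le_rfl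
  rw [Nat.sub_self, Nat.zero_add] at hmain
  have hlist : (List.range n).map
      (fun i => ann (ξ (i + 1)) + astar (ξ (i + 1)) + gauge (T (i + 1))) =
      (List.range n).map
      (fun i => ann (ξ (1 + i)) + astar (ξ (1 + i)) + gauge (T (1 + i))) :=
    List.map_congr_left (fun a _ => by rw [Nat.add_comm a 1])
  rw [hlist, hmain, Finset.sum_sigma']
  apply Finset.sum_congr rfl
  intro p _
  rw [wt]
  simp only [innF]

end
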